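/- Let E_c ∈ ℝ^{n×n} (c ∈ I) satisfy ∑_{c∈I} E_c[ξ]² = 2 at every pixel ξ, let A ∈ ℝ^{n×n} have strictly positive entries, let χ = {(E_c ⊙ A ⊙ e^{iΦ})_{c∈I} : Φ ∈ ℝ^{n×n}} ⊆ H, and for d = 1, …, m let Ω_d = M_d⁻¹(S_{r_d}) where M_d : H → H are unitary operators, r_d ∈ ℝ^{n×n} are entrywise nonnegative, and S_{r_d} = {y ∈ H : ∑_{c∈I} |y_c[ξ]|² = r_d[ξ] for all ξ}. Then the product set B_χ = χ × Ω_1 × ⋯ × Ω_m ⊆ H^{m+1} is prox-regular at every point (x̂, x̂_1, …, x̂_m) ∈ B_χ such that for every d = 1, …, m and every pixel ξ, (M_d x̂_d)[ξ] ≠ 0. -/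

import Mathlib

noncomputable section

/-- The underlying space `H` of 6-tuples of `n × n` complex matrices, with the
Frobenius (Euclidean) inner product. -/
abbrev H (n : ℕ) := EuclideanSpace ℂ (Fin 6 × Fin n × Fin n)

/-- The product Hilbert space `H^k`. -/
abbrev Hm (n k : ℕ) := PiLp 2 (fun _ : Fin k => H n)

/-- The (possibly multivalued) metric projector onto a set `Ω`. -/
def proj {E : Type*} [NormedAddCommGroup E] (Ω : Set E) (x : E) : Set E :=
  {w | w ∈ Ω ∧ dist x w = Metric.infDist x Ω}

/-- A set `Ω` is prox-regular at `xhat ∈ Ω` if the projector `P_Ω` is single-valued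
on some neighborhood of `xhat`. -/
def ProxRegularAt {E : Type*} [NormedAddCommGroup E] (Ω : Set E) (xhat : E) : Prop :=
  ∃ U ∈ nhds xhat, ∀ x ∈ U, ∃! w, w ∈ proj Ω x

/-! ### Auxiliary material -/

/-- Reindexing of the pixel/channel index set. -/
def eIdx (n : ℕ) : (Fin 6 × Fin n × Fin n) ≃ (Σ _ : Fin n × Fin n, Fin 6) :=
  (Equiv.prodComm _ _).trans (Equiv.sigmaEquivProd (Fin n × Fin n) (Fin 6)).symm

/-- The isometric identification of `H n` with the product over pixels of `ℂ⁶` blocks. -/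
def KK (n : ℕ) : H n ≃ₗᵢ[ℂ] PiLp 2 (fun _ : Fin n × Fin n => EuclideanSpace ℂ (Fin 6)) :=
  (LinearIsometryEquiv.piLpCongrLeft 2 ℂ ℂ (eIdx n)).trans
    (LinearIsometryEquiv.piLpCurry ℂ 2 (fun _ : Fin n × Fin n => fun _ : Fin 6 => ℂ))

lemma KK_apply {n : ℕ} (y : H n) (ξ : Fin n × Fin n) (c : Fin 6) :
    KK n y ξ c = y (c, ξ) := rfl

lemma le_infDist_of {α : Type*} [PseudoMetricSpace α] {s : Set α} {x : α} {b : ℝ}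
    (hs : s.Nonempty) (h : ∀ y ∈ s, b ≤ dist x y) : b ≤ Metric.infDist x s := by
  rw [Metric.infDist_eq_iInf]
  haveI := hs.to_subtype
  exact le_ciInf fun y => h y y.2

lemma re_eq_abs_imp {z : ℂ} (h : z.re = ‖z‖) : z = (‖z‖ : ℂ) := by
  have h2 : z.re ^ 2 + z.im ^ 2 = ‖z‖ ^ 2 := by
    rw [Complex.sq_norm, Complex.normSq_apply]; ring
  have him : z.im = 0 := by
    rw [h] at h2
    have h3 : z.im ^ 2 = 0 := by linarith
    simpa using pow_eq_zero_iff (n := 2) (by norm_num) |>.mp h3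
  exact Complex.ext (by simp [h]) (by simp [him])

/-! ### Transport of prox-regularity along isometries -/

section transport

variable {α β : Type*} [NormedAddCommGroup α] [NormedAddCommGroup β]
  [NormedSpace ℂ α] [NormedSpace ℂ β]

lemma proj_preimage_isometry (f : α ≃ₗᵢ[ℂ] β) (Ω : Set β) (x w : α) :
    w ∈ proj (f ⁻¹' Ω) x ↔ f w ∈ proj Ω (f x) := by
  have himg : f '' (f ⁻¹' Ω) = Ω := Set.image_preimage_eq Ω f.surjective
  have hd : Metric.infDist x (f ⁻¹' Ω) = Metric.infDist (f x) Ω := by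
    conv_rhs => rw [← himg]
    rw [Metric.infDist_image f.isometry]
  have hdd : dist x w = dist (f x) (f w) := (f.dist_map x w).symm
  simp only [proj, Set.mem_setOf_eq, Set.mem_preimage, hd, hdd]

lemma ProxRegularAt.preimage_isometry (f : α ≃ₗᵢ[ℂ] β) {Ω : Set β} {x : α}
    (h : ProxRegularAt Ω (f x)) : ProxRegularAt (f ⁻¹' Ω) x := by
  obtain ⟨U, hU, hu⟩ := h
  refine ⟨f ⁻¹' U, f.continuous.continuousAt.preimage_mem_nhds hU, fun y hy => ?_⟩
  obtain ⟨w, hw, huniq⟩ := hu (f y) hy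
  refine ⟨f.symm w, ?_, fun z hz => ?_⟩
  · exact (proj_preimage_isometry f Ω y (f.symm w)).2 (by simpa using hw)
  · have hz' := huniq (f z) ((proj_preimage_isometry f Ω y z).1 hz)
    rw [← hz', f.symm_apply_apply]

end transport

/-! ### Prox-regularity of products -/

lemma proxRegularAt_pi {ι : Type*} [Fintype ι] {E : ι → Type*}
    [∀ i, NormedAddCommGroup (E i)] (F : ∀ i, Set (E i)) (x : PiLp 2 E)
    (h : ∀ i, ProxRegularAt (F i) (x i)) :
    ProxRegularAt {u : PiLp 2 E | ∀ i, u i ∈ F i} x := by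
  classical
  choose U hU hu using h
  have heval : ∀ i : ι, Continuous fun u : PiLp 2 E => u i :=
    fun i => (continuous_apply i).comp (PiLp.continuous_ofLp ..)
  refine ⟨⋂ i, (fun u : PiLp 2 E => u i) ⁻¹' (U i), ?_, ?_⟩
  · exact Filter.iInter_mem.2 fun i => (heval i).continuousAt.preimage_mem_nhds (hU i)
  · intro y hy
    simp only [Set.mem_iInter, Set.mem_preimage] at hy
    have h' : ∀ i, ∃ w, w ∈ proj (F i) (y i) ∧ ∀ z, z ∈ proj (F i) (y i) → z = w :=
      fun i => hu i (y i) (hy i)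
    choose w hw huniq using h'
    set w' : PiLp 2 E := WithLp.toLp 2 w with hw'
    have hwmem : w' ∈ {u : PiLp 2 E | ∀ i, u i ∈ F i} := fun i => (hw i).1
    have hdist_le : ∀ u : PiLp 2 E, (∀ i, u i ∈ F i) → dist y w' ≤ dist y u := by
      intro u hu'
      rw [PiLp.dist_eq_of_L2, PiLp.dist_eq_of_L2]
      apply Real.sqrt_le_sqrt
      refine Finset.sum_le_sum fun i _ => ?_
      have h1 : dist (y i) (w' i) = Metric.infDist (y i) (F i) := (hw i).2
      have h2 : Metric.infDist (y i) (F i) ≤ dist (y i) (u i) :=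
        Metric.infDist_le_dist_of_mem (hu' i)
      exact pow_le_pow_left₀ dist_nonneg (h1 ▸ h2) 2
    have hinf : Metric.infDist y {u : PiLp 2 E | ∀ i, u i ∈ F i} = dist y w' :=
      le_antisymm (Metric.infDist_le_dist_of_mem hwmem)
        (le_infDist_of ⟨w', hwmem⟩ fun u hu' => hdist_le u hu')
    refine ⟨w', ⟨hwmem, hinf.symm⟩, ?_⟩
    rintro z ⟨hzΩ, hzd⟩
    have hsq : ∑ i, Metric.infDist (y i) (F i) ^ 2 = ∑ i, dist (y i) (z i) ^ 2 := by
      have e1 : dist y z = dist y w' := by rw [hzd, hinf]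
      have e2 := congrArg (fun t : ℝ => t ^ 2) e1
      simp only [PiLp.dist_eq_of_L2] at e2
      rw [Real.sq_sqrt (by positivity), Real.sq_sqrt (by positivity)] at e2
      calc ∑ i, Metric.infDist (y i) (F i) ^ 2
          = ∑ i, dist (y i) (w' i) ^ 2 := Finset.sum_congr rfl fun i _ => by rw [(hw i).2]
        _ = ∑ i, dist (y i) (z i) ^ 2 := e2.symm
    have hterm := (Finset.sum_eq_sum_iff_of_le
      (fun i _ => pow_le_pow_left₀ Metric.infDist_nonneg
        (Metric.infDist_le_dist_of_mem (hzΩ i)) 2)).1 hsq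
    have hcomp : ∀ i, z i = w i := by
      intro i
      refine huniq i _ ⟨hzΩ i, ?_⟩
      have h2 := (hterm i (Finset.mem_univ i)).symm
      have h3 := congrArg Real.sqrt h2
      rwa [Real.sqrt_sq dist_nonneg, Real.sqrt_sq Metric.infDist_nonneg] at h3
    exact PiLp.ext hcomp

/-! ### Prox-regularity of spheres and of phase circles -/

section blocks

variable {EE : Type*} [NormedAddCommGroup EE] [InnerProductSpace ℂ EE]

lemma dist_sq_eq (y u : EE) :
    dist y u ^ 2 = ‖y‖ ^ 2 - 2 * Complex.re (inner ℂ y u) + ‖u‖ ^ 2 := by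
  rw [dist_eq_norm]
  exact norm_sub_sq (𝕜 := ℂ) y u

lemma proxRegularAt_sphere {ρ : ℝ} (hρ : 0 < ρ) {x : EE} (hx : x ≠ 0) :
    ProxRegularAt (Metric.sphere (0 : EE) ρ) x := by
  refine ⟨{0}ᶜ, isOpen_compl_singleton.mem_nhds hx, fun y hy => ?_⟩
  have hy0 : y ≠ 0 := hy
  have hny : (0 : ℝ) < ‖y‖ := norm_pos_iff.2 hy0
  set w : EE := ((ρ / ‖y‖ : ℝ) : ℂ) • y with hw
  have hwmem : w ∈ Metric.sphere (0 : EE) ρ := by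
    rw [mem_sphere_zero_iff_norm, hw, norm_smul, Complex.norm_real, Real.norm_eq_abs,
      abs_of_pos (by positivity), div_mul_cancel₀ _ hny.ne']
  have hinner_w : Complex.re (inner ℂ y w) = ρ * ‖y‖ := by
    rw [hw, inner_smul_right, Complex.re_ofReal_mul,
      show ((inner ℂ y y)).re = ‖y‖ ^ 2 from inner_self_eq_norm_sq (𝕜 := ℂ) y]
    field_simp
  have hdw : dist y w ^ 2 = (‖y‖ - ρ) ^ 2 := by
    rw [dist_sq_eq, hinner_w, mem_sphere_zero_iff_norm.1 hwmem]; ring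
  have hle : ∀ u ∈ Metric.sphere (0 : EE) ρ, dist y w ≤ dist y u := by
    intro u hu
    have hun : ‖u‖ = ρ := mem_sphere_zero_iff_norm.1 hu
    have h1 : Complex.re (inner ℂ y u) ≤ ‖y‖ * ρ := by
      have := re_inner_le_norm (𝕜 := ℂ) y u
      rwa [hun] at this
    have h2 : dist y w ^ 2 ≤ dist y u ^ 2 := by
      rw [hdw, dist_sq_eq, hun]; nlinarith
    exact (pow_le_pow_iff_left₀ dist_nonneg dist_nonneg two_ne_zero).1 h2
  have hinf : Metric.infDist y (Metric.sphere (0 : EE) ρ) = dist y w :=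
    le_antisymm (Metric.infDist_le_dist_of_mem hwmem)
      (le_infDist_of ⟨w, hwmem⟩ hle)
  refine ⟨w, ⟨hwmem, hinf.symm⟩, ?_⟩
  rintro u ⟨hu, hud⟩
  have hun : ‖u‖ = ρ := mem_sphere_zero_iff_norm.1 hu
  have heq : dist y u ^ 2 = dist y w ^ 2 := by rw [hud, hinf]
  have hre : Complex.re (inner ℂ y u) = ‖y‖ * ρ := by
    rw [dist_sq_eq, hun, hdw] at heq; nlinarith
  have habs : ‖(inner ℂ y u)‖ ≤ ‖y‖ * ρ := by
    have := norm_inner_le_norm (𝕜 := ℂ) y u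
    rwa [hun] at this
  have habs' : ‖(inner ℂ y u)‖ = Complex.re (inner ℂ y u) := by
    have := Complex.re_le_norm (inner ℂ y u)
    rw [hre] at this ⊢
    linarith
  have hinner_eq : (inner ℂ y u) = ((‖y‖ : ℂ) * (‖u‖ : ℂ)) := by
    have := re_eq_abs_imp (z := (inner ℂ y u)) habs'.symm
    rw [this, habs', hre, hun]
    push_cast
    ring
  have hsmul : ((‖u‖ : ℂ)) • y = ((‖y‖ : ℂ)) • u :=
    inner_eq_norm_mul_iff (𝕜 := ℂ) (x := y) (y := u) |>.1 hinner_eq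
  have hyne : (‖y‖ : ℂ) ≠ 0 := by
    simpa using hny.ne'
  have hu' : u = ((‖y‖ : ℂ))⁻¹ • ((‖u‖ : ℂ) • y) := by
    rw [hsmul, smul_smul, inv_mul_cancel₀ hyne, one_smul]
  rw [hu', hun, hw, smul_smul]
  congr 1
  push_cast
  rw [inv_mul_eq_div]

lemma proxRegularAt_circle (a : EE) {x : EE} (hx : (inner ℂ a x) ≠ 0) :
    ProxRegularAt {y : EE | ∃ φ : ℝ, y = Complex.exp (φ * Complex.I) • a} x := by
  refine ⟨{y : EE | (inner ℂ a y) ≠ 0}, ?_, fun y hy => ?_⟩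
  · have hopen : IsOpen {y : EE | (inner ℂ a y) ≠ 0} := by
      have : {y : EE | (inner ℂ a y) ≠ 0} = (fun y : EE => (inner ℂ a y)) ⁻¹' {0}ᶜ := rfl
      rw [this]
      exact isOpen_compl_singleton.preimage (Continuous.inner continuous_const continuous_id)
    exact hopen.mem_nhds hx
  · set s : ℂ := inner ℂ a y with hs
    have hs0 : s ≠ 0 := hy
    have habs_s : (0 : ℝ) < ‖s‖ := by
      simpa [norm_pos_iff] using hs0
    set Ωc : Set EE := {y : EE | ∃ φ : ℝ, y = Complex.exp (φ * Complex.I) • a} with hΩc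
    set w : EE := Complex.exp ((Complex.arg s : ℂ) * Complex.I) • a with hw
    have hexp_arg : Complex.exp ((Complex.arg s : ℂ) * Complex.I) = s / (‖s‖ : ℂ) := by
      rw [eq_div_iff (by exact_mod_cast habs_s.ne')]
      rw [mul_comm]
      exact_mod_cast Complex.norm_mul_exp_arg_mul_I s
    have hwmem : w ∈ Ωc := ⟨Complex.arg s, rfl⟩
    have hinner_u : ∀ φ : ℝ, (inner ℂ y (Complex.exp ((φ : ℂ) * Complex.I) • a))
        = Complex.exp ((φ : ℂ) * Complex.I) * (starRingEnd ℂ) s := by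
      intro φ
      rw [inner_smul_right, ← inner_conj_symm, hs]
    have hnorm_u : ∀ φ : ℝ, ‖Complex.exp ((φ : ℂ) * Complex.I) • a‖ = ‖a‖ := by
      intro φ
      rw [norm_smul, Complex.norm_exp_ofReal_mul_I, one_mul]
    have hre_w : Complex.re (inner ℂ y w) = ‖s‖ := by
      have habs_ne : ((‖s‖ : ℝ) : ℂ) ≠ 0 := by exact_mod_cast habs_s.ne'
      rw [hw, hinner_u, hexp_arg, div_mul_eq_mul_div, Complex.mul_conj, Complex.normSq_eq_norm_sq]
      have hcast : ((‖s‖ ^ 2 : ℝ) : ℂ) / ((‖s‖ : ℝ) : ℂ)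
          = ((‖s‖ : ℝ) : ℂ) := by
        push_cast
        rw [sq]
        field_simp
      rw [hcast, Complex.ofReal_re]
    have hre_le : ∀ φ : ℝ, Complex.re (inner ℂ y (Complex.exp ((φ : ℂ) * Complex.I) • a))
        ≤ ‖s‖ := by
      intro φ
      rw [hinner_u]
      calc Complex.re _ ≤ ‖(Complex.exp ((φ : ℂ) * Complex.I) * (starRingEnd ℂ) s)‖ :=
            Complex.re_le_norm _
        _ = ‖s‖ := by
            rw [norm_mul, Complex.norm_exp_ofReal_mul_I, one_mul, Complex.norm_conj]
    have hdist_sq : ∀ φ : ℝ, dist y (Complex.exp ((φ : ℂ) * Complex.I) • a) ^ 2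
        = ‖y‖ ^ 2 - 2 * Complex.re (inner ℂ y (Complex.exp ((φ : ℂ) * Complex.I) • a))
          + ‖a‖ ^ 2 := by
      intro φ
      rw [dist_sq_eq, hnorm_u]
    have hle : ∀ u ∈ Ωc, dist y w ≤ dist y u := by
      rintro u ⟨φ, rfl⟩
      have h2 : dist y w ^ 2 ≤ dist y (Complex.exp ((φ : ℂ) * Complex.I) • a) ^ 2 := by
        rw [hdist_sq φ, hw, hdist_sq (Complex.arg s), hre_w]
        nlinarith [hre_le φ]
      exact (pow_le_pow_iff_left₀ dist_nonneg dist_nonneg two_ne_zero).1 h2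
    have hinf : Metric.infDist y Ωc = dist y w :=
      le_antisymm (Metric.infDist_le_dist_of_mem hwmem) (le_infDist_of ⟨w, hwmem⟩ hle)
    refine ⟨w, ⟨hwmem, hinf.symm⟩, ?_⟩
    rintro u ⟨⟨φ, rfl⟩, hud⟩
    have heq : dist y (Complex.exp ((φ : ℂ) * Complex.I) • a) ^ 2 = dist y w ^ 2 := by
      rw [hud, hinf]
    have hre_u : Complex.re (inner ℂ y (Complex.exp ((φ : ℂ) * Complex.I) • a))
        = ‖s‖ := by
      rw [hdist_sq φ] at heq
      rw [hw, hdist_sq (Complex.arg s), hre_w] at heq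
      linarith
    set z : ℂ := Complex.exp ((φ : ℂ) * Complex.I) * (starRingEnd ℂ) s with hz
    have habs_z : ‖z‖ = ‖s‖ := by
      rw [hz, norm_mul, Complex.norm_exp_ofReal_mul_I, one_mul, Complex.norm_conj]
    have hre_z : z.re = ‖z‖ := by
      rw [habs_z, ← hre_u, hinner_u]
    have hz_eq : z = (‖s‖ : ℂ) := by
      rw [← habs_z]; exact re_eq_abs_imp hre_z
    have hconj_ne : (starRingEnd ℂ) s ≠ 0 := by simpa using hs0
    have hexp_eq : Complex.exp ((φ : ℂ) * Complex.I)
        = Complex.exp ((Complex.arg s : ℂ) * Complex.I) := by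
      have h1 : Complex.exp ((φ : ℂ) * Complex.I) * (starRingEnd ℂ) s
          = Complex.exp ((Complex.arg s : ℂ) * Complex.I) * (starRingEnd ℂ) s := by
        have habs_ne : ((‖s‖ : ℝ) : ℂ) ≠ 0 := by exact_mod_cast habs_s.ne'
        rw [← hz, hz_eq, hexp_arg, div_mul_eq_mul_div, Complex.mul_conj, Complex.normSq_eq_norm_sq]
        push_cast
        rw [sq]
        field_simp
      exact mul_right_cancel₀ hconj_ne h1
    rw [hw, ← hexp_eq]

end blocks

/-! ### The main theorem -/

/-- The product set `B_χ = χ × Ω₁ × ⋯ × Ω_m ⊆ H^{m+1}`, with `χ` the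
known-amplitude constraint set (strictly positive amplitude `A`, `∑_c E_c[ξ]² = 2`) and
`Ω_d = M_d⁻¹(S_{r_d})` for unitary `M_d`, is prox-regular at every point
`(xhat, xhat₁, …, xhat_m) ∈ B_χ` such that `(M_d xhat_d)[ξ] ≠ 0` for all `d` and all
pixels `ξ`. -/
theorem proxRegularAt_B_chi (n m : ℕ) (hn : 1 ≤ n) (hm : 1 ≤ m)
    (E : Fin 6 → Fin n × Fin n → ℝ)
    (hE : ∀ ξ, ∑ c : Fin 6, (E c ξ) ^ 2 = 2)
    (A : Fin n × Fin n → ℝ) (hA : ∀ ξ, 0 < A ξ)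
    (χ : Set (H n))
    (hχ : χ = {y : H n | ∃ Φ : Fin n × Fin n → ℝ,
      ∀ c ξ, y (c, ξ) = (E c ξ : ℂ) * (A ξ : ℂ) * Complex.exp (Complex.I * (Φ ξ : ℂ))})
    (M : Fin m → (H n ≃ₗᵢ[ℂ] H n))
    (r : Fin m → Fin n × Fin n → ℝ) (hr : ∀ d ξ, 0 ≤ r d ξ)
    (Sr : Fin m → Set (H n))
    (hSr : ∀ d, Sr d = {y : H n | ∀ ξ, ∑ c : Fin 6, ‖y (c, ξ)‖ ^ 2 = r d ξ})
    (Ω : Fin m → Set (H n)) (hΩ : ∀ d, Ω d = (M d) ⁻¹' (Sr d))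
    (Bχ : Set (Hm n (m + 1)))
    (hBχ : Bχ = {u : Hm n (m + 1) | u 0 ∈ χ ∧ ∀ d : Fin m, u d.succ ∈ Ω d})
    (xhat : Hm n (m + 1)) (hxhat : xhat ∈ Bχ)
    (hnz : ∀ (d : Fin m) ξ, ∃ c, (M d (xhat d.succ)) (c, ξ) ≠ 0) :
    ProxRegularAt Bχ xhat := by
  classical
  rw [hBχ] at hxhat
  obtain ⟨hx0, hxs⟩ := hxhat
  -- the phase vector of the first component
  rw [hχ] at hx0
  obtain ⟨Φ, hΦ⟩ := hx0
  -- the per-pixel amplitude vectors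
  set a : (Fin n × Fin n) → EuclideanSpace ℂ (Fin 6) :=
    fun ξ => WithLp.toLp 2 (fun c => ((E c ξ * A ξ : ℝ) : ℂ)) with ha
  -- Factor 0 : the amplitude constraint set χ
  have hfact0 : ProxRegularAt χ (xhat 0) := by
    have hχeq : χ = (KK n) ⁻¹'
        {v : PiLp 2 (fun _ : Fin n × Fin n => EuclideanSpace ℂ (Fin 6)) |
          ∀ ξ, v ξ ∈ {y : EuclideanSpace ℂ (Fin 6) |
            ∃ φ : ℝ, y = Complex.exp (φ * Complex.I) • a ξ}} := by
      rw [hχ]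
      ext y
      simp only [Set.mem_preimage, Set.mem_setOf_eq]
      constructor
      · rintro ⟨Ψ, hΨ⟩ ξ
        refine ⟨Ψ ξ, PiLp.ext fun c => ?_⟩
        have hsc : (Complex.exp ((Ψ ξ : ℂ) * Complex.I) • a ξ) c
            = Complex.exp ((Ψ ξ : ℂ) * Complex.I) * a ξ c := rfl
        rw [KK_apply, hΨ c ξ, hsc, show ((Ψ ξ : ℂ)) * Complex.I
          = Complex.I * ((Ψ ξ : ℂ)) from mul_comm _ _]
        simp only [ha]
        push_cast
        ring
      · intro h
        choose Ψ hΨ using h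
        refine ⟨Ψ, fun c ξ => ?_⟩
        have h5 : KK n y ξ c = (Complex.exp ((Ψ ξ : ℂ) * Complex.I) • a ξ) c := by
          rw [hΨ ξ]
        rw [KK_apply] at h5
        rw [h5, show (Complex.exp ((Ψ ξ : ℂ) * Complex.I) • a ξ) c
          = Complex.exp ((Ψ ξ : ℂ) * Complex.I) * a ξ c from rfl,
          show ((Ψ ξ : ℂ)) * Complex.I = Complex.I * ((Ψ ξ : ℂ)) from mul_comm _ _]
        simp only [ha]
        push_cast
        ring
    rw [hχeq]
    apply ProxRegularAt.preimage_isometry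
    apply proxRegularAt_pi
    intro ξ
    apply proxRegularAt_circle
    -- the inner product with the amplitude vector does not vanish at the base point
    have hval : (inner ℂ (a ξ) ((KK n (xhat 0)) ξ))
        = (∑ c : Fin 6, ((E c ξ : ℂ)) ^ 2) *
            ((A ξ : ℂ) ^ 2 * Complex.exp (Complex.I * (Φ ξ : ℂ))) := by
      rw [PiLp.inner_apply]
      simp only [RCLike.inner_apply]
      rw [Finset.sum_mul]
      refine Finset.sum_congr rfl fun c _ => ?_
      rw [KK_apply, hΦ c ξ]
      simp only [ha]
      rw [Complex.conj_ofReal]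
      push_cast
      ring
    have hsumE : (∑ c : Fin 6, ((E c ξ : ℂ)) ^ 2) = 2 := by
      exact_mod_cast congrArg (fun t : ℝ => (t : ℂ)) (hE ξ)
    rw [hval, hsumE]
    refine mul_ne_zero two_ne_zero (mul_ne_zero (pow_ne_zero 2 ?_) (Complex.exp_ne_zero _))
    exact_mod_cast (hA ξ).ne'
  -- Factors 1..m : the unitary preimages of the pixelwise spheres
  have hfactd : ∀ d : Fin m, ProxRegularAt (Ω d) (xhat d.succ) := by
    intro d
    have hmem : M d (xhat d.succ) ∈ Sr d := by
      have := hxs d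
      rw [hΩ d] at this
      exact this
    rw [hSr d] at hmem
    have hSreq : Sr d = (KK n) ⁻¹'
        {v : PiLp 2 (fun _ : Fin n × Fin n => EuclideanSpace ℂ (Fin 6)) |
          ∀ ξ, v ξ ∈ Metric.sphere (0 : EuclideanSpace ℂ (Fin 6)) (Real.sqrt (r d ξ))} := by
      rw [hSr d]
      ext y
      simp only [Set.mem_preimage, Set.mem_setOf_eq, mem_sphere_zero_iff_norm]
      refine forall_congr' fun ξ => ?_
      rw [EuclideanSpace.norm_eq]
      have hKc : ∀ c : Fin 6, ‖(KK n y) ξ c‖ = ‖y (c, ξ)‖ := fun c => by rw [KK_apply]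
      simp_rw [hKc]
      exact (Real.sqrt_inj
        (Finset.sum_nonneg fun c _ => pow_nonneg (norm_nonneg (y (c, ξ))) 2) (hr d ξ)).symm
    rw [hΩ d, hSreq]
    apply ProxRegularAt.preimage_isometry (M d)
    apply ProxRegularAt.preimage_isometry (KK n)
    apply proxRegularAt_pi
    intro ξ
    obtain ⟨c0, hc0⟩ := hnz d ξ
    have hpos : 0 < r d ξ := by
      rw [← hmem ξ]
      refine Finset.sum_pos' (fun c _ => pow_nonneg (norm_nonneg _) _)
        ⟨c0, Finset.mem_univ c0, ?_⟩
      exact pow_pos (norm_pos_iff.2 hc0) 2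
    refine proxRegularAt_sphere (Real.sqrt_pos.2 hpos) ?_
    intro h0
    apply hc0
    have h5 : KK n (M d (xhat d.succ)) ξ c0 = (0 : EuclideanSpace ℂ (Fin 6)) c0 := by
      rw [h0]
    rw [KK_apply] at h5
    exact h5
  -- assemble the product
  set F : Fin (m + 1) → Set (H n) := Fin.cases χ Ω with hF
  have hF0 : F 0 = χ := rfl
  have hFs : ∀ d : Fin m, F d.succ = Ω d := fun d => by simp [hF]
  have hBχ' : Bχ = {u : Hm n (m + 1) | ∀ i, u i ∈ F i} := by
    rw [hBχ]
    ext u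
    simp only [Set.mem_setOf_eq]
    constructor
    · rintro ⟨h0, hsucc⟩ i
      refine Fin.cases (motive := fun i => u i ∈ F i) ?_ ?_ i
      · simpa [hF0] using h0
      · intro d
        simpa [hFs d] using hsucc d
    · intro h
      refine ⟨?_, fun d => ?_⟩
      · have := h 0; rwa [hF0] at this
      · have := h d.succ; rwa [hFs d] at this
  rw [hBχ']
  refine proxRegularAt_pi _ xhat (fun i =>
    Fin.cases (motive := fun i => ProxRegularAt (F i) (xhat i))
      ?_ ?_ i)
  · simpa [hF0] using hfact0
  · intro d
    simpa [hFs d] using hfactd d
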